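/- arXiv:1005.5061 — 3 statements merged into one kernel-verified Lean document; each statement's English description precedes it below -/
import Mathlib

section
/- Let α₁, α₂, α₃ be integers with α_i ≥ 2, let β₁, β₂, β₃ be integers with gcd(α_i, β_i) = 1, let σ be a permutation of {1,2,3} with α_{σ(i)} = α_i for all i, and let n₁, n₂, n₃ be integers with n₁ + n₂ + n₃ = 0. Then it is impossible that β_{σ(i)} + β_i = -n_i α_i holds for all i = 1,2,3. -/
/-!
A permutation of three points is either an involution or a 3-cycle.

For an involution, a fixed point `i` gives `2 βᵢ = -nᵢ αᵢ`, so coprimality forces `αᵢ = 2` and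
`nᵢ = -βᵢ` odd, while a swapped pair `i ↔ j` has `αᵢ = αⱼ` and the same left-hand side, so
`nᵢ = nⱼ`. Hence `n₁ + n₂ + n₃ ≡ 3 (mod 2)`, which is not `0`.

For a 3-cycle all `αᵢ` equal a common `a`, and summing the equations gives `Σ βᵢ = 0`; then
`β_{σ²(i)} = -(βᵢ + β_{σ(i)}) = nᵢ a` is divisible by `a`, against coprimality.
-/

theorem Equiv.Perm.involutive_or_cycle_fin_three (σ : Equiv.Perm (Fin 3)) :
    Function.Involutive σ ∨ (σ 0 = 1 ∧ σ 1 = 2 ∧ σ 2 = 0) ∨ (σ 0 = 2 ∧ σ 2 = 1 ∧ σ 1 = 0) := by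
  have key : ∀ τ : Equiv.Perm (Fin 3), (∀ i, τ (τ i) = i) ∨ (τ 0 = 1 ∧ τ 1 = 2 ∧ τ 2 = 0) ∨
      (τ 0 = 2 ∧ τ 2 = 1 ∧ τ 1 = 0) := by
    decide
  exact key σ

theorem Function.Involutive.sum_intCast_zmod_two_eq_card {ι : Type*} [Fintype ι] {σ : ι → ι}
    (hσ : Function.Involutive σ) (n : ι → ℤ) (hn : ∀ i, n (σ i) = n i)
    (hfix : ∀ i, σ i = i → Odd (n i)) :
    ((∑ i, n i : ℤ) : ZMod 2) = Fintype.card ι := by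
  -- `n i + 1` vanishes at the fixed points and cancels in pairs along the 2-cycles of `σ`.
  have hsum : ∑ i, ((n i : ZMod 2) + 1) = 0 := by
    refine Finset.sum_ninvolution σ (fun i => ?_) (fun i hi hfixed => hi ?_)
      (fun _ => Finset.mem_univ _) hσ
    · rw [hn, CharTwo.add_self_eq_zero]
    · rw [(hfix i hfixed).intCast_zmod_two, CharTwo.add_self_eq_zero]
  rw [Finset.sum_add_distrib, Finset.sum_const, nsmul_one, Finset.card_univ] at hsum
  push_cast
  exact CharTwo.add_eq_zero.mp hsum

theorem Int.odd_of_add_self_eq_neg_mul {a b m : ℤ} (ha : 2 ≤ a) (hab : Int.gcd a b = 1)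
    (h : b + b = -m * a) : Odd m := by
  have hcop : IsCoprime a b := Int.isCoprime_iff_gcd_eq_one.mpr hab
  have ha2 : a = 2 :=
    le_antisymm (Int.le_of_dvd two_pos (hcop.dvd_of_dvd_mul_right ⟨-m, by linarith⟩)) ha
  subst ha2
  have hb : Odd b := Int.isCoprime_two_left.mp hcop
  rwa [show m = -b by linarith, odd_neg]

theorem Int.not_dvd_of_gcd_eq_one {a b : ℤ} (ha : 2 ≤ a) (hab : Int.gcd a b = 1) : ¬ a ∣ b := by
  intro hdvd
  have hunit := (Int.isCoprime_iff_gcd_eq_one.mpr hab).isUnit_of_dvd' dvd_rfl hdvd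
  rw [Int.isUnit_iff] at hunit
  omega

section

variable {ι : Type*} {α β n : ι → ℤ} {σ : Equiv.Perm ι}

theorem sum_intCast_zmod_two_eq_card_of_involutive [Fintype ι] (hinv : Function.Involutive σ)
    (hα : ∀ i, 2 ≤ α i) (hgcd : ∀ i, Int.gcd (α i) (β i) = 1) (hσ : ∀ i, α (σ i) = α i)
    (h : ∀ i, β (σ i) + β i = -(n i) * α i) :
    ((∑ i, n i : ℤ) : ZMod 2) = Fintype.card ι := by
  refine hinv.sum_intCast_zmod_two_eq_card n (fun i => ?_) (fun i hi => ?_)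
  · have hi := h (σ i)
    rw [hinv i, hσ, add_comm, h i] at hi
    exact mul_right_cancel₀ (zero_lt_two.trans_le (hα i)).ne' (by linarith)
  · exact Int.odd_of_add_self_eq_neg_mul (hα i) (hgcd i) (by simpa [hi] using h i)

theorem false_of_cyclic_triple {i j k : ι} (hij : σ i = j) (hjk : σ j = k) (hki : σ k = i)
    (hα : 2 ≤ α k) (hgcd : Int.gcd (α k) (β k) = 1) (hσ : ∀ i, α (σ i) = α i)
    (hn : n i + n j + n k = 0) (h : ∀ i, β (σ i) + β i = -(n i) * α i) : False := by
  have hαi : α i = α k := by rw [← hσ k, hki]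
  have hαj : α j = α k := by rw [← hσ j, hjk]
  have hi := h i
  have hj := h j
  have hk := h k
  rw [hij, hαi] at hi
  rw [hjk, hαj] at hj
  rw [hki] at hk
  exact Int.not_dvd_of_gcd_eq_one hα hgcd ⟨n i, by linarith [mul_eq_zero_of_left hn (α k)]⟩

end

/-- Given integers `αᵢ ≥ 2`, integers `βᵢ` with `gcd(αᵢ,βᵢ) = 1`,
a permutation `σ` of `{1,2,3}` with `α_{σ(i)} = αᵢ`, and integers `nᵢ` with
`n₁ + n₂ + n₃ = 0`, it is impossible that `β_{σ(i)} + βᵢ = -nᵢ αᵢ` for all `i`. -/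
theorem stmt4 (α : Fin 3 → ℤ) (β : Fin 3 → ℤ) (n : Fin 3 → ℤ)
    (hα : ∀ i, 2 ≤ α i) (hgcd : ∀ i, Int.gcd (α i) (β i) = 1)
    (σ : Equiv.Perm (Fin 3)) (hσ : ∀ i, α (σ i) = α i)
    (hn : n 0 + n 1 + n 2 = 0) :
    ¬ (∀ i, β (σ i) + β i = -(n i) * α i) := by
  intro h
  rcases σ.involutive_or_cycle_fin_three with hinv | ⟨h0, h1, h2⟩ | ⟨h0, h2, h1⟩
  · have hpar := sum_intCast_zmod_two_eq_card_of_involutive hinv hα hgcd hσ h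
    rw [Fin.sum_univ_three, hn] at hpar
    exact absurd hpar (by decide)
  · exact false_of_cyclic_triple h0 h1 h2 (hα 2) (hgcd 2) hσ hn h
  · exact false_of_cyclic_triple h0 h2 h1 (hα 1) (hgcd 1) hσ (by linarith) h
end

section
/- Let α₁, α₂, α₃ be integers with α_i ≥ 2 and β₁, β₂, β₃ integers with gcd(α_i, β_i) = 1 for each i. Suppose σ is a permutation of {1,2,3} with α_{σ(i)} = α_i for all i, and β₁/α₁ + β₂/α₂ + β₃/α₃ = 0 with β_{σ(i)}/α_{σ(i)} + β_i/α_i ∈ ℤ for each i. Then all α_i = 2 is forced, contradicting gcd(α_i,β_i)=1 with Σβ_i/α_i = 0; hence no such data exist. -/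
/-- Fixed point: α = 2 and β odd. -/
lemma fixpt (a b : ℤ) (ha : 2 ≤ a) (hg : Int.gcd a b = 1) (hd : a ∣ b + b) :
    a = 2 ∧ ¬ (2 ∣ b) := by
  have hd2 : a ∣ 2 * b := by rwa [two_mul]
  have hcop : IsCoprime a b := Int.isCoprime_iff_gcd_eq_one.mpr hg
  have ha2 : a ∣ 2 := hcop.dvd_of_dvd_mul_right hd2
  have hle : a ≤ 2 := Int.le_of_dvd (by norm_num) ha2
  have haeq : a = 2 := le_antisymm hle ha
  refine ⟨haeq, fun h2b => ?_⟩
  have : (2 : ℤ) ∣ (Int.gcd a b : ℤ) := Int.dvd_coe_gcd ⟨1, by omega⟩ h2b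
  rw [hg] at this
  norm_num at this

lemma Ltrans (a bk s : ℤ) (ha : 2 ≤ a) (hs : a ∣ s) (hodd : ¬ (2 ∣ bk))
    (hsum : 2 * a * s + a * a * bk = 0) : False := by
  obtain ⟨k, hk⟩ := hs
  have h : a * a * (2 * k + bk) = 0 := by linear_combination hsum + (2 * a) * hk.symm
  have ha0 : a * a ≠ 0 := by positivity
  have : 2 * k + bk = 0 := by
    rcases mul_eq_zero.mp h with h' | h'
    · exact absurd h' ha0
    · exact h'
  omega

lemma L3cyc (a b0 b1 b2 : ℤ) (ha : 2 ≤ a) (hg : Int.gcd a b2 = 1)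
    (hd : a ∣ b0 + b1) (hsum : a * a * (b0 + b1 + b2) = 0) : False := by
  have ha0 : a * a ≠ 0 := by positivity
  have hz : b0 + b1 + b2 = 0 := by
    rcases mul_eq_zero.mp hsum with h' | h'
    · exact absurd h' ha0
    · exact h'
  have hb2 : a ∣ b2 := by
    have : a ∣ -(b0 + b1) := dvd_neg.mpr hd
    have e : b2 = -(b0 + b1) := by omega
    rwa [← e] at this
  have : a ∣ (Int.gcd a b2 : ℤ) := Int.dvd_coe_gcd dvd_rfl hb2
  rw [hg] at this
  have := Int.le_of_dvd (by norm_num) this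
  omega

/-- Given integers `αᵢ ≥ 2`, `βᵢ` with `gcd(αᵢ,βᵢ) = 1`, and a
permutation `σ` of `{1,2,3}` with `α_{σ(i)} = αᵢ` for all `i`, the conditions
`β₁/α₁ + β₂/α₂ + β₃/α₃ = 0` and `β_{σ(i)}/α_{σ(i)} + βᵢ/αᵢ ∈ ℤ` for each `i`
are inconsistent: no such data exist. -/
theorem stmt5 (α : Fin 3 → ℤ) (β : Fin 3 → ℤ)
    (hα : ∀ i, 2 ≤ α i) (hgcd : ∀ i, Int.gcd (α i) (β i) = 1)
    (σ : Equiv.Perm (Fin 3)) (hσ : ∀ i, α (σ i) = α i)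
    (hsum : (β 0 : ℚ) / (α 0 : ℚ) + (β 1 : ℚ) / (α 1 : ℚ) + (β 2 : ℚ) / (α 2 : ℚ) = 0)
    (hint : ∀ i, ∃ m : ℤ,
      (β (σ i) : ℚ) / (α (σ i) : ℚ) + (β i : ℚ) / (α i : ℚ) = (m : ℚ)) :
    False := by
  have hαQ : ∀ i, (α i : ℚ) ≠ 0 := by
    intro i
    have := hα i
    exact_mod_cast (by omega : α i ≠ 0)
  have hd : ∀ i, α i ∣ β (σ i) + β i := by
    intro i
    obtain ⟨m, hm⟩ := hint i
    rw [hσ i] at hm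
    have h0 := hαQ i
    field_simp at hm
    refine ⟨m, ?_⟩
    exact_mod_cast hm
  have h0 := hαQ 0; have h1 := hαQ 1; have h2 := hαQ 2
  field_simp at hsum
  have hS : β 0 * (α 1 * α 2) + β 1 * (α 0 * α 2) + β 2 * (α 0 * α 1) = 0 := by
    exact_mod_cast (by linear_combination hsum : (β 0 * (α 1 * α 2) + β 1 * (α 0 * α 2) + β 2 * (α 0 * α 1) : ℚ) = 0)
  have d0 := hd 0; have d1 := hd 1; have d2 := hd 2
  have g0 := hgcd 0; have g1 := hgcd 1; have g2 := hgcd 2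
  have s0 := hσ 0; have s1 := hσ 1; have s2 := hσ 2
  have a0 := hα 0; have a1 := hα 1; have a2 := hα 2
  obtain ⟨x0, e0⟩ : ∃ x, σ 0 = x := ⟨_, rfl⟩
  obtain ⟨x1, e1⟩ : ∃ x, σ 1 = x := ⟨_, rfl⟩
  obtain ⟨x2, e2⟩ : ∃ x, σ 2 = x := ⟨_, rfl⟩
  rw [e0] at d0 s0; rw [e1] at d1 s1; rw [e2] at d2 s2
  fin_cases x0 <;> fin_cases x1 <;> fin_cases x2 <;>
    [skip; skip; skip; skip; skip; skip; skip; skip; skip; skip; skip; skip; skip;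
     skip; skip; skip; skip; skip; skip; skip; skip; skip; skip; skip; skip; skip; skip] <;>
    first
    | exact absurd (σ.injective (e0.trans e1.symm)) (by decide)
    | exact absurd (σ.injective (e0.trans e2.symm)) (by decide)
    | exact absurd (σ.injective (e1.trans e2.symm)) (by decide)
    | skip
  -- 6 remaining goals: id, (1 2), (0 1), (0 1 2), (0 2 1), (0 2)
  · -- identity
    obtain ⟨ha0', hb0⟩ := fixpt (α 0) (β 0) a0 g0 d0
    obtain ⟨ha1', hb1⟩ := fixpt (α 1) (β 1) a1 g1 d1
    obtain ⟨ha2', hb2⟩ := fixpt (α 2) (β 2) a2 g2 d2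
    rw [ha0', ha1', ha2'] at hS
    omega
  · -- (1 2)
    obtain ⟨ha0', hb0⟩ := fixpt (α 0) (β 0) a0 g0 d0
    have s1' : α 2 = α 1 := s1
    have d1' : α 1 ∣ β 1 + β 2 := by have : α 1 ∣ β 2 + β 1 := d1; rwa [add_comm] at this
    rw [ha0', s1'] at hS
    exact Ltrans (α 1) (β 0) (β 1 + β 2) a1 d1' hb0 (by linear_combination hS)
  · -- (0 1)
    obtain ⟨ha2', hb2⟩ := fixpt (α 2) (β 2) a2 g2 d2
    have s0' : α 1 = α 0 := s0
    have d0' : α 0 ∣ β 1 + β 0 := d0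
    rw [ha2', s0'] at hS
    exact Ltrans (α 0) (β 2) (β 1 + β 0) a0 d0' hb2 (by linear_combination hS)
  · -- (0 1 2)
    have s0' : α 1 = α 0 := s0
    have s1' : α 2 = α 1 := s1
    have d0' : α 0 ∣ β 0 + β 1 := by have : α 0 ∣ β 1 + β 0 := d0; rwa [add_comm] at this
    rw [s1', s0'] at hS
    have g2' : Int.gcd (α 0) (β 2) = 1 := by rw [← s0', ← s1']; exact g2
    exact L3cyc (α 0) (β 0) (β 1) (β 2) a0 g2' d0' (by linear_combination hS)
  · -- (0 2 1)
    have s0' : α 2 = α 0 := s0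
    have s1' : α 0 = α 1 := s1
    have d0' : α 0 ∣ β 2 + β 0 := d0
    rw [s0', ← s1'] at hS
    have g1' : Int.gcd (α 0) (β 1) = 1 := by rw [s1']; exact g1
    exact L3cyc (α 0) (β 2) (β 0) (β 1) a0 g1' d0' (by linear_combination hS)
  · -- (0 2)
    obtain ⟨ha1', hb1⟩ := fixpt (α 1) (β 1) a1 g1 d1
    have s0' : α 2 = α 0 := s0
    have d0' : α 0 ∣ β 2 + β 0 := d0
    rw [ha1', s0'] at hS
    exact Ltrans (α 0) (β 1) (β 2 + β 0) a0 d0' hb1 (by linear_combination hS)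
end

section
/- In the group G = ⟨q₁,q₂,q₃,t | t central, q_i^{α_i} t^{β_i} = 1, q₁q₂q₃ = 1⟩, the assignment θ(t) = t, θ(q_j) = q_k t^n, θ(q_k) = q_j t^{-n}, θ(q_m) determined by θ(q₁q₂q₃) = 1 (where {j,k,m} = {1,2,3}) defines an automorphism of G, provided α_j = α_k and β_k - β_j = n α_j. -/
/-
Replacing `(q_j, q_k)` by `(q_k tⁿ, q_j t⁻ⁿ)` keeps the power relations because
`α_j = α_k` and `β_k = β_j + nα_j`, and turns the product `q_j q_k` into `q_k q_j`; setting
`q_m' = q_{m+1}⁻¹ q_{m+2}⁻¹`, a conjugate of `q_m`, restores the product relation. The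
resulting endomorphism is an involution, hence an automorphism.
-/

/-- The defining relators of the Seifert fibered space group
`⟨q₁,q₂,q₃,t | t qᵢ t⁻¹ qᵢ⁻¹, qᵢ^{αᵢ} t^{βᵢ}, q₁q₂q₃⟩`,
on generators `0,1,2` (the `qᵢ`) and `3` (the fiber class `t`). -/
def seifertRels (α : Fin 3 → ℕ) (β : Fin 3 → ℤ) : Set (FreeGroup (Fin 4)) :=
  (Set.range fun i : Fin 3 =>
      FreeGroup.of (3 : Fin 4) * FreeGroup.of i.castSucc *
        (FreeGroup.of (3 : Fin 4))⁻¹ * (FreeGroup.of i.castSucc)⁻¹) ∪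
  (Set.range fun i : Fin 3 =>
      FreeGroup.of i.castSucc ^ (α i) * FreeGroup.of (3 : Fin 4) ^ (β i)) ∪
  {FreeGroup.of (0 : Fin 4) * FreeGroup.of (1 : Fin 4) * FreeGroup.of (2 : Fin 4)}

section Group

variable {G : Type*} [Group G]

lemma Commute.mul_zpow_pow_mul_zpow {q t : G} (h : Commute q t) (n : ℤ) (a : ℕ) (b : ℤ) :
    (q * t ^ n) ^ a * t ^ b = q ^ a * t ^ (n * a + b) := by
  rw [(h.zpow_right n).mul_pow, ← zpow_natCast (t ^ n), ← zpow_mul, mul_assoc, ← zpow_add]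

lemma Commute.conj_pow_mul_zpow {c t : G} (h : Commute c t) (x : G) (a : ℕ) (b : ℤ) :
    (c⁻¹ * x * c) ^ a * t ^ b = c⁻¹ * (x ^ a * t ^ b) * c := by
  have hconj := conj_pow (a := c⁻¹) (b := x) (i := a)
  rw [inv_inv] at hconj
  rw [hconj, mul_assoc (c⁻¹ * x ^ a), (h.zpow_right b).eq]
  group

lemma mul_mul_eq_one_rotate (x : Fin 3 → G) (i : Fin 3) :
    x i * x (i + 1) * x (i + 2) = 1 ↔ x 0 * x 1 * x 2 = 1 := by
  have rotate : ∀ a b c : G, a * b * c = 1 ↔ b * c * a = 1 := fun a b c => by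
    rw [mul_assoc, mul_eq_one_comm]
  fin_cases i
  · rfl
  · exact (rotate _ _ _).symm
  · exact ((rotate _ _ _).trans (rotate _ _ _)).symm

end Group

lemma Fin.add_one_add_two_of_ne {i j k : Fin 3} (hjk : j ≠ k) (hij : i ≠ j) (hik : i ≠ k) :
    i + 1 = j ∧ i + 2 = k ∨ i + 1 = k ∧ i + 2 = j := by
  revert i j k
  decide

lemma Fin.exists_ne_and_ne (j k : Fin 3) : ∃ m, m ≠ j ∧ m ≠ k := by
  revert j k
  decide

namespace Seifert

variable {H : Type*} [Group H]

structure Relations (α : Fin 3 → ℕ) (β : Fin 3 → ℤ) (q : Fin 3 → H) (t : H) : Prop where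
  commute : ∀ i, Commute (q i) t
  pow_mul_zpow : ∀ i, q i ^ α i * t ^ β i = 1
  prod : q 0 * q 1 * q 2 = 1

variable {α : Fin 3 → ℕ} {β : Fin 3 → ℤ} {q : Fin 3 → H} {t : H} {n : ℤ} {j k : Fin 3}

lemma Relations.prod_rotate (h : Relations α β q t) (i : Fin 3) :
    q i * q (i + 1) * q (i + 2) = 1 :=
  (mul_mul_eq_one_rotate q i).2 h.prod

/-- The images of the `qᵢ` under `θ`; in both cyclic orders of `j, k, m`, the relation
`θ(q₀q₁q₂) = 1` forces `θ(q_m) = q_{m+1}⁻¹ q_{m+2}⁻¹`. -/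
def swapTwist (q : Fin 3 → H) (t : H) (n : ℤ) (j k : Fin 3) (i : Fin 3) : H :=
  if i = j then q k * t ^ n
  else if i = k then q j * t ^ (-n)
  else (q (i + 1))⁻¹ * (q (i + 2))⁻¹

lemma swapTwist_left : swapTwist q t n j k j = q k * t ^ n :=
  if_pos rfl

lemma swapTwist_right (hjk : j ≠ k) : swapTwist q t n j k k = q j * t ^ (-n) := by
  rw [swapTwist, if_neg hjk.symm, if_pos rfl]

lemma swapTwist_of_ne {i : Fin 3} (hij : i ≠ j) (hik : i ≠ k) :
    swapTwist q t n j k i = (q (i + 1))⁻¹ * (q (i + 2))⁻¹ := by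
  rw [swapTwist, if_neg hij, if_neg hik]

lemma map_swapTwist {K : Type*} [Group K] (f : H →* K) (i : Fin 3) :
    f (swapTwist q t n j k i) = swapTwist (f ∘ q) (f t) n j k i := by
  unfold swapTwist
  split_ifs <;> simp

lemma swapTwist_mul_swapTwist (hq : ∀ i, Commute (q i) t) (hjk : j ≠ k) {a b : Fin 3}
    (hab : a = j ∧ b = k ∨ a = k ∧ b = j) :
    swapTwist q t n j k a * swapTwist q t n j k b = q b * q a := by
  rcases hab with ⟨rfl, rfl⟩ | ⟨rfl, rfl⟩
  · rw [swapTwist_left, swapTwist_right hjk, mul_assoc, ← mul_assoc (t ^ n),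
      ← ((hq a).zpow_right n).eq]
    group
  · rw [swapTwist_left, swapTwist_right hjk, mul_assoc, ← mul_assoc (t ^ (-n)),
      ← ((hq a).zpow_right (-n)).eq]
    group

lemma swapTwist_swapTwist (hq : ∀ i, Commute (q i) t) (hprod : q 0 * q 1 * q 2 = 1)
    (hjk : j ≠ k) : swapTwist (swapTwist q t n j k) t n j k = q := by
  funext i
  rcases eq_or_ne i j with rfl | hij
  · rw [swapTwist_left, swapTwist_right hjk]
    group
  rcases eq_or_ne i k with rfl | hik
  · rw [swapTwist_right hjk, swapTwist_left]
    group
  have hrot : q i * (q (i + 1) * q (i + 2)) = 1 := by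
    rw [← mul_assoc, mul_mul_eq_one_rotate]
    exact hprod
  rw [swapTwist_of_ne hij hik, ← mul_inv_rev,
    swapTwist_mul_swapTwist hq hjk
      ((Fin.add_one_add_two_of_ne hjk hij hik).symm.imp And.symm And.symm),
    eq_inv_of_mul_eq_one_left hrot]

theorem Relations.swapTwist (h : Relations α β q t) (hjk : j ≠ k) (hα : α j = α k)
    (hβ : β k - β j = n * α j) : Relations α β (swapTwist q t n j k) t where
  commute i := by
    unfold Seifert.swapTwist
    split_ifs
    · exact (h.commute k).mul_left ((Commute.refl t).zpow_left n)
    · exact (h.commute j).mul_left ((Commute.refl t).zpow_left (-n))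
    · exact (h.commute _).inv_left.mul_left (h.commute _).inv_left
  pow_mul_zpow i := by
    rcases eq_or_ne i j with rfl | hij
    · rw [swapTwist_left, (h.commute k).mul_zpow_pow_mul_zpow, hα,
        show n * α k + β i = β k by push_cast [← hα]; linarith, h.pow_mul_zpow k]
    rcases eq_or_ne i k with rfl | hik
    · rw [swapTwist_right hjk, (h.commute j).mul_zpow_pow_mul_zpow, ← hα,
        show -n * α j + β i = β j by linarith, h.pow_mul_zpow j]
    rw [swapTwist_of_ne hij hik, ← eq_inv_of_mul_eq_one_left (h.prod_rotate i),
      ← mul_assoc, (h.commute _).conj_pow_mul_zpow, h.pow_mul_zpow, mul_one, inv_mul_cancel]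
  prod := by
    obtain ⟨m, hmj, hmk⟩ := Fin.exists_ne_and_ne j k
    rw [← mul_mul_eq_one_rotate _ m, mul_assoc,
      swapTwist_mul_swapTwist h.commute hjk (Fin.add_one_add_two_of_ne hjk hmj hmk),
      swapTwist_of_ne hmj hmk]
    group

theorem relations_of :
    Relations α β (fun i => (PresentedGroup.of i.castSucc : PresentedGroup (seifertRels α β)))
      (PresentedGroup.of 3) where
  commute i := by
    have h := PresentedGroup.one_of_mem (rels := seifertRels α β) (Or.inl (Or.inl ⟨i, rfl⟩))
    simp only [map_mul, map_inv] at h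
    rw [mul_inv_eq_one, mul_inv_eq_iff_eq_mul] at h
    exact h.symm
  pow_mul_zpow i := by
    have h := PresentedGroup.one_of_mem (rels := seifertRels α β) (Or.inl (Or.inr ⟨i, rfl⟩))
    simp only [map_mul, map_pow, map_zpow] at h
    exact h
  prod := by
    have h := PresentedGroup.one_of_mem (rels := seifertRels α β) (Or.inr rfl)
    simp only [map_mul] at h
    exact h

def Relations.lift (h : Relations α β q t) : PresentedGroup (seifertRels α β) →* H :=
  PresentedGroup.toGroup (f := Fin.snoc (α := fun _ => H) q t) <| by
    rintro r ((⟨i, rfl⟩ | ⟨i, rfl⟩) | rfl) <;>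
      simp only [map_mul, map_inv, map_pow, map_zpow, FreeGroup.lift_apply_of,
        Fin.snoc_castSucc]
    · change t * q i * t⁻¹ * (q i)⁻¹ = 1
      rw [← (h.commute i).eq, mul_inv_cancel_right, mul_inv_cancel]
    · exact h.pow_mul_zpow i
    · exact h.prod

lemma Relations.lift_of_castSucc (h : Relations α β q t) (i : Fin 3) :
    h.lift (PresentedGroup.of i.castSucc) = q i := by
  rw [Relations.lift, PresentedGroup.toGroup.of, Fin.snoc_castSucc]

lemma Relations.lift_of_three (h : Relations α β q t) : h.lift (PresentedGroup.of 3) = t :=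
  PresentedGroup.toGroup.of _

def swapTwistHom (hjk : j ≠ k) (hα : α j = α k) (hβ : β k - β j = n * α j) :
    PresentedGroup (seifertRels α β) →* PresentedGroup (seifertRels α β) :=
  (relations_of.swapTwist hjk hα hβ).lift

lemma swapTwistHom_of_castSucc (hjk : j ≠ k) (hα : α j = α k) (hβ : β k - β j = n * α j)
    (i : Fin 3) :
    swapTwistHom hjk hα hβ (PresentedGroup.of i.castSucc) =
      swapTwist (fun i => PresentedGroup.of i.castSucc) (PresentedGroup.of 3) n j k i :=
  Relations.lift_of_castSucc _ i

lemma swapTwistHom_of_three (hjk : j ≠ k) (hα : α j = α k) (hβ : β k - β j = n * α j) :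
    swapTwistHom hjk hα hβ (PresentedGroup.of 3) = PresentedGroup.of 3 :=
  Relations.lift_of_three _

lemma swapTwistHom_comp_self (hjk : j ≠ k) (hα : α j = α k) (hβ : β k - β j = n * α j) :
    (swapTwistHom hjk hα hβ).comp (swapTwistHom hjk hα hβ) = MonoidHom.id _ := by
  refine PresentedGroup.ext fun x => ?_
  induction x using Fin.lastCases with
  | last =>
    change swapTwistHom hjk hα hβ (swapTwistHom hjk hα hβ (.of 3)) = .of 3
    rw [swapTwistHom_of_three, swapTwistHom_of_three]
  | cast i =>
    change swapTwistHom hjk hα hβ (swapTwistHom hjk hα hβ _) = _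
    rw [swapTwistHom_of_castSucc, map_swapTwist, swapTwistHom_of_three,
      show _ ∘ _ = _ from funext (swapTwistHom_of_castSucc hjk hα hβ),
      swapTwist_swapTwist relations_of.commute relations_of.prod hjk]
    rfl

def swapTwistEquiv (hjk : j ≠ k) (hα : α j = α k) (hβ : β k - β j = n * α j) :
    PresentedGroup (seifertRels α β) ≃* PresentedGroup (seifertRels α β) :=
  (swapTwistHom hjk hα hβ).toMulEquiv (swapTwistHom hjk hα hβ)
    (swapTwistHom_comp_self hjk hα hβ) (swapTwistHom_comp_self hjk hα hβ)

end Seifert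

theorem stmt18_general (α : Fin 3 → ℕ) (β : Fin 3 → ℤ)
    (j k : Fin 3) (hjk : j ≠ k)
    (n : ℤ) (hαjk : α j = α k) (hβ : β k - β j = n * (α j : ℤ)) :
    ∃ θ : PresentedGroup (seifertRels α β) ≃* PresentedGroup (seifertRels α β),
      θ (PresentedGroup.of (3 : Fin 4)) = PresentedGroup.of (3 : Fin 4) ∧
      θ (PresentedGroup.of j.castSucc) =
        PresentedGroup.of k.castSucc *
          (PresentedGroup.of (3 : Fin 4) : PresentedGroup (seifertRels α β)) ^ n ∧
      θ (PresentedGroup.of k.castSucc) =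
        PresentedGroup.of j.castSucc *
          (PresentedGroup.of (3 : Fin 4) : PresentedGroup (seifertRels α β)) ^ (-n) :=
  ⟨Seifert.swapTwistEquiv hjk hαjk hβ, Seifert.swapTwistHom_of_three hjk hαjk hβ,
    (Seifert.swapTwistHom_of_castSucc hjk hαjk hβ j).trans Seifert.swapTwist_left,
    (Seifert.swapTwistHom_of_castSucc hjk hαjk hβ k).trans (Seifert.swapTwist_right hjk)⟩

/-- In `G = ⟨q₁,q₂,q₃,t | t central, qᵢ^{αᵢ} t^{βᵢ} = 1, q₁q₂q₃ = 1⟩`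
(each `αᵢ ≥ 2`, `gcd(αᵢ,βᵢ) = 1`), if `{j,k,m} = {1,2,3}`, `α_j = α_k` and
`β_k - β_j = n α_j`, then the assignment `θ(t) = t`, `θ(q_j) = q_k tⁿ`,
`θ(q_k) = q_j t⁻ⁿ` (with `θ(q_m)` determined by `θ(q₁q₂q₃) = 1`) defines an
automorphism of `G`. -/
theorem stmt18 (α : Fin 3 → ℕ) (β : Fin 3 → ℤ)
    (hα : ∀ i, 2 ≤ α i) (hgcd : ∀ i, Int.gcd (α i : ℤ) (β i) = 1)
    (j k m : Fin 3) (hjk : j ≠ k) (hjm : j ≠ m) (hkm : k ≠ m)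
    (n : ℤ) (hαjk : α j = α k) (hβ : β k - β j = n * (α j : ℤ)) :
    ∃ θ : PresentedGroup (seifertRels α β) ≃* PresentedGroup (seifertRels α β),
      θ (PresentedGroup.of (3 : Fin 4)) = PresentedGroup.of (3 : Fin 4) ∧
      θ (PresentedGroup.of j.castSucc) =
        PresentedGroup.of k.castSucc *
          (PresentedGroup.of (3 : Fin 4) : PresentedGroup (seifertRels α β)) ^ n ∧
      θ (PresentedGroup.of k.castSucc) =
        PresentedGroup.of j.castSucc *
          (PresentedGroup.of (3 : Fin 4) : PresentedGroup (seifertRels α β)) ^ (-n) :=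
  stmt18_general α β j k hjk n hαjk hβ
end
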